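/- Let ǧ be a finite-dimensional nilpotent real Lie algebra with nondegenerate symmetric bilinear form ǧg, and let σ₁,…,σ_k be 2-forms on ǧ satisfying σ_s([x,y],z) + σ_s([y,z],x) + σ_s([z,x],y) = 0 for all x,y,z ∈ ǧ and all s. Let 𝔤 = ǧ ⊕ ℝᵏ (with basis e₁,…,e_k of ℝᵏ) be the central extension with bracket [v,w]_𝔤 = [v,w]_ǧ − Σ_s σ_s(v,w) e_s for v,w ∈ ǧ and e₁,…,e_k central, endowed with the metric g = ǧg + Σ_s ε_s e^s⊗e^s with ε_s = ±1 (so ǧ ⊥ ℝᵏ, g(e_s,e_t) = ε_s δ_{st}). Then for all v,w ∈ ǧ and all s,t: ric_𝔤(v,w) = ric_ǧ(v,w) − (1/2)Σ_s ε_s ǧg(v⌟σ_s, w⌟σ_s); ric_𝔤(v,e_s) = (1/2)ε_s ǧg(ďv♭, σ_s); and ric_𝔤(e_s,e_t) = (1/2)ε_s ε_t ǧg(σ_s,σ_t), where ric_𝔤 and ric_ǧ are the Ricci tensors of (𝔤,g) and (ǧ,ǧg), ďv♭ is the 2-form on ǧ given by (x,y) ↦ −ǧg(v,[x,y]_ǧ),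 and the scalar products of 1-forms and 2-forms are those induced by ǧg. -/

import Mathlib

open LinearMap Module

noncomputable section

variable {V : Type} [AddCommGroup V] [Module ℝ V] [FiniteDimensional ℝ V]

/-- A Lie bracket on a real vector space, given as a bilinear map. -/
def IsLieBracket (br : V →ₗ[ℝ] V →ₗ[ℝ] V) : Prop :=
  (∀ x y, br x y = - br y x) ∧
    ∀ x y z, br (br x y) z + br (br y z) x + br (br z x) y = 0

/-- Nilpotency of a Lie bracket: iterated adjoint maps of length `n` vanish. -/
def IsNilpotentBracket (br : V →ₗ[ℝ] V →ₗ[ℝ] V) : Prop :=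
  ∃ n : ℕ, ∀ l : List V, l.length = n → ∀ x : V,
    l.foldr (fun v y => br v y) x = 0

/-- The derived series of a bracket. -/
def derivedSeriesB (br : V →ₗ[ℝ] V →ₗ[ℝ] V) : ℕ → Submodule ℝ V
  | 0 => ⊤
  | n + 1 => Submodule.span ℝ
      {x | ∃ a ∈ derivedSeriesB br n, ∃ b ∈ derivedSeriesB br n, x = br a b}

/-- Solvability of a Lie bracket. -/
def IsSolvableBracket (br : V →ₗ[ℝ] V →ₗ[ℝ] V) : Prop :=
  ∃ n, derivedSeriesB br n = ⊥

/-- `D` is a derivation of the bracket `br`. -/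
def IsDerivB (br : V →ₗ[ℝ] V →ₗ[ℝ] V) (D : V →ₗ[ℝ] V) : Prop :=
  ∀ x y, D (br x y) = br (D x) y + br x (D y)

/-- The musical isomorphism `♯` of a nondegenerate bilinear form. -/
def sharp (g : LinearMap.BilinForm ℝ V) (hg : g.Nondegenerate) :
    Module.Dual ℝ V →ₗ[ℝ] V :=
  (LinearMap.BilinForm.toDual g hg).symm.toLinearMap

/-- The adjoint `f*` of an endomorphism with respect to `g` :
`g (f x) y = g x (f* y)` (for symmetric `g`). -/
def adjE (g : LinearMap.BilinForm ℝ V) (hg : g.Nondegenerate)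
    (f : V →ₗ[ℝ] V) : V →ₗ[ℝ] V :=
  sharp g hg ∘ₗ ((LinearMap.llcomp ℝ V V ℝ).flip f ∘ₗ g.flip)

/-- The symmetric part `f^s = (f + f*)/2`. -/
def symPart (g : LinearMap.BilinForm ℝ V) (hg : g.Nondegenerate)
    (f : V →ₗ[ℝ] V) : V →ₗ[ℝ] V := (2:ℝ)⁻¹ • (f + adjE g hg f)

/-- The skew-symmetric part `f^a = (f - f*)/2`. -/
def skewPart (g : LinearMap.BilinForm ℝ V) (hg : g.Nondegenerate)
    (f : V →ₗ[ℝ] V) : V →ₗ[ℝ] V := (2:ℝ)⁻¹ • (f - adjE g hg f)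

/-- The endomorphism `A` associated to a bilinear form `β` by `g (A x) y = β x y`. -/
def endoOf (g : LinearMap.BilinForm ℝ V) (hg : g.Nondegenerate)
    (β : LinearMap.BilinForm ℝ V) : V →ₗ[ℝ] V := sharp g hg ∘ₗ β

/-- The scalar product of two 1-forms: `g(α♯, β♯)`. -/
def inner1 (g : LinearMap.BilinForm ℝ V) (hg : g.Nondegenerate)
    (α β : Module.Dual ℝ V) : ℝ := g (sharp g hg α) (sharp g hg β)

/-- The scalar product of two endomorphisms: `Tr (f ∘ h*)`. -/
def innerEndo (g : LinearMap.BilinForm ℝ V) (hg : g.Nondegenerate)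
    (f h : V →ₗ[ℝ] V) : ℝ := trace ℝ V (f ∘ₗ adjE g hg h)

/-- The scalar product of two 2-forms: `(1/2) Tr (A ∘ B*)`. -/
def inner2 (g : LinearMap.BilinForm ℝ V) (hg : g.Nondegenerate)
    (α β : LinearMap.BilinForm ℝ V) : ℝ :=
  (2:ℝ)⁻¹ * trace ℝ V (endoOf g hg α ∘ₗ adjE g hg (endoOf g hg β))

/-- The 2-form `d(v♭) : (x, y) ↦ - g(v, [x,y])`. -/
def dflat (g : LinearMap.BilinForm ℝ V) (br : V →ₗ[ℝ] V →ₗ[ℝ] V)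
    (v : V) : LinearMap.BilinForm ℝ V :=
  - ((LinearMap.llcomp ℝ V V ℝ (g v)) ∘ₗ br)

/-- The Ricci tensor of a metric Lie algebra:
`2 ric(v,w) = -Tr ad((v⌟dw♭ + w⌟dv♭)♯) + g(dv♭,dw♭) - g(ad v, ad w) - Tr(ad v ∘ ad w)`. -/
def ricci (br : V →ₗ[ℝ] V →ₗ[ℝ] V) (g : LinearMap.BilinForm ℝ V)
    (hg : g.Nondegenerate) (v w : V) : ℝ :=
  (- trace ℝ V (br (sharp g hg (dflat g br w v + dflat g br v w)))
    + inner2 g hg (dflat g br v) (dflat g br w)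
    - innerEndo g hg (br v) (br w)
    - trace ℝ V (br v ∘ₗ br w)) / 2

/-- A Sasaki structure `(φ, ξ, η, g)` on a Lie algebra with bracket `br`. -/
def IsSasaki (br : V →ₗ[ℝ] V →ₗ[ℝ] V) (g : LinearMap.BilinForm ℝ V)
    (φ : V →ₗ[ℝ] V) (ξ : V) (η : Module.Dual ℝ V) : Prop :=
  η ξ = 1 ∧ (∀ x, η (φ x) = 0) ∧ (∀ x, φ (φ x) = - x + η x • ξ) ∧
    g ξ ξ = 1 ∧ (∀ x, η x = g ξ x) ∧
    (∀ x y, g (φ x) (φ y) = g x y - η x * η y) ∧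
    (∀ x y, φ (φ (br x y)) + br (φ x) (φ y) - φ (br (φ x) y)
        - φ (br x (φ y)) - η (br x y) • ξ = 0) ∧
    (∀ x y, - η (br x y) = 2 * g x (φ y))

/-- A pseudo-Kähler structure `(g, J, ω)`, where `ω (x, y) = g (x, J y)`. -/
def IsPseudoKahler (br : V →ₗ[ℝ] V →ₗ[ℝ] V) (g : LinearMap.BilinForm ℝ V)
    (J : V →ₗ[ℝ] V) : Prop :=
  (∀ x, J (J x) = - x) ∧ (∀ x y, g (J x) (J y) = g x y) ∧
    (∀ x y, br (J x) (J y) - J (br (J x) y) - J (br x (J y)) - br x y = 0) ∧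
    (∀ x y z, g (br x y) (J z) + g (br y z) (J x) + g (br z x) (J y) = 0)

/-!
In `𝔤 = ǧ ⊕ ℝᵏ` every `ad p` has block form: it maps `ǧ` by `ad p₁ - Σ_s σ_s(p₁, ·) e_s` and kills
the centre. Hence `ad p` is traceless (as `ad p₁` is, `ǧ` being nilpotent), `Tr(ad p ∘ ad q)` is
computed on `ǧ`, and `d p♭` is the pull-back of the 2-form `ďp₁♭ + Σ_s ε_s p_s σ_s` of `ǧ`, so that
its scalar products are those of `ǧ`. The only new contribution comes from the adjoint of `ad v`,
which acquires the component `-Σ_s ε_s y_s (v⌟σ_s)♯`; this adds `Σ_s ε_s ǧg(v⌟σ_s, w⌟σ_s)` to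
`g(ad v, ad w)`. Evaluating the resulting formula on `ǧ` and on the `e_s` gives the three cases.
-/

section MetricLieAlgebra

variable (g : LinearMap.BilinForm ℝ V) (hg : g.Nondegenerate)

lemma apply_sharp (α : Module.Dual ℝ V) (y : V) : g (sharp g hg α) y = α y :=
  LinearMap.BilinForm.apply_toDual_symm_apply α y

lemma sharp_eq_of_forall_apply {α : Module.Dual ℝ V} {u : V} (h : ∀ y, g u y = α y) :
    sharp g hg α = u :=
  (LinearEquiv.symm_apply_eq _).mpr (LinearMap.ext fun y => (h y).symm)

lemma apply_adjE (f : V →ₗ[ℝ] V) (y z : V) : g (adjE g hg f y) z = g (f z) y :=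
  apply_sharp g hg _ z

lemma adjE_eq_of_forall_apply {f : V →ₗ[ℝ] V} {y u : V} (h : ∀ z, g u z = g (f z) y) :
    adjE g hg f y = u :=
  sharp_eq_of_forall_apply g hg h

lemma innerEndo_zero_right (f : V →ₗ[ℝ] V) : innerEndo g hg f 0 = 0 := by
  simp [innerEndo, adjE]

lemma inner1_zero_right (α : Module.Dual ℝ V) : inner1 g hg α 0 = 0 := by
  simp [inner1]

lemma inner2_smul_left (c : ℝ) (α β : LinearMap.BilinForm ℝ V) :
    inner2 g hg (c • α) β = c * inner2 g hg α β := by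
  simp only [inner2, endoOf, LinearMap.comp_smul, LinearMap.smul_comp, map_smul, smul_eq_mul]
  ring

lemma inner2_smul_right (c : ℝ) (α β : LinearMap.BilinForm ℝ V) :
    inner2 g hg α (c • β) = c * inner2 g hg α β := by
  have hadj : adjE g hg (endoOf g hg (c • β)) = c • adjE g hg (endoOf g hg β) := by
    ext y
    refine adjE_eq_of_forall_apply g hg fun z => ?_
    simp [endoOf, apply_adjE]
  simp only [inner2, hadj, LinearMap.comp_smul, map_smul, smul_eq_mul]
  ring

lemma ricci_eq_of_trace_eq_zero (br : V →ₗ[ℝ] V →ₗ[ℝ] V) (htr : ∀ u, trace ℝ V (br u) = 0)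
    (v w : V) :
    ricci br g hg v w =
      (inner2 g hg (dflat g br v) (dflat g br w) - innerEndo g hg (br v) (br w)
        - trace ℝ V (br v ∘ₗ br w)) / 2 := by
  rw [ricci, htr]
  ring

end MetricLieAlgebra

lemma trace_eq_zero_of_isNilpotentBracket {V : Type} [AddCommGroup V] [Module ℝ V]
    {br : V →ₗ[ℝ] V →ₗ[ℝ] V} (hnil : IsNilpotentBracket br) (u : V) :
    trace ℝ V (br u) = 0 := by
  obtain ⟨n, hn⟩ := hnil
  have hfold : ∀ (m : ℕ) (x : V),
      (List.replicate m u).foldr (fun v y => br v y) x = (br u ^ m) x := by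
    intro m x
    induction m with
    | zero => simp
    | succ m ih => simp [List.replicate_succ, ih, pow_succ', Module.End.mul_apply]
  have hpow : br u ^ n = 0 := LinearMap.ext fun x => by
    rw [← hfold, hn _ List.length_replicate, LinearMap.zero_apply]
  exact isNilpotent_iff_eq_zero.mp (LinearMap.isNilpotent_trace_of_isNilpotent ⟨n, hpow⟩)

lemma trace_prod_eq_add {K : Type} [AddCommGroup K] [Module ℝ K] [FiniteDimensional ℝ K]
    (T : (V × K) →ₗ[ℝ] (V × K)) :
    trace ℝ (V × K) T =
      trace ℝ V (fst ℝ V K ∘ₗ T ∘ₗ inl ℝ V K) + trace ℝ K (snd ℝ V K ∘ₗ T ∘ₗ inr ℝ V K) := by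
  have hT : T = inl ℝ V K ∘ₗ (fst ℝ V K ∘ₗ T) + inr ℝ V K ∘ₗ (snd ℝ V K ∘ₗ T) := by
    ext x <;> simp
  nth_rewrite 1 [hT]
  rw [map_add, trace_comp_comm' (fst ℝ V K ∘ₗ T), trace_comp_comm' (snd ℝ V K ∘ₗ T),
    comp_assoc, comp_assoc]

lemma trace_pi_eq_sum {k : ℕ} (M : (Fin k → ℝ) →ₗ[ℝ] (Fin k → ℝ)) :
    trace ℝ (Fin k → ℝ) M = ∑ s, M (Pi.single s 1) s := by
  rw [trace_eq_matrix_trace ℝ (Pi.basisFun ℝ (Fin k)) M, Matrix.trace]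
  simp [Matrix.diag]

section CentralExtension

variable {k : ℕ}

def IsOrthogonalSumMetric (g : LinearMap.BilinForm ℝ V) (ε : Fin k → ℝ)
    (gW : LinearMap.BilinForm ℝ (V × (Fin k → ℝ))) : Prop :=
  ∀ p q, gW p q = g p.1 q.1 + ∑ s, ε s * p.2 s * q.2 s

def IsCentralExtBracket (br : V →ₗ[ℝ] V →ₗ[ℝ] V) (σ : Fin k → LinearMap.BilinForm ℝ V)
    (brW : (V × (Fin k → ℝ)) →ₗ[ℝ] (V × (Fin k → ℝ)) →ₗ[ℝ] (V × (Fin k → ℝ))) : Prop :=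
  ∀ p q, brW p q = (br p.1 q.1, fun s => - σ s p.1 q.1)

/-- `d p♭` on `𝔤` is the pull-back of this 2-form on `ǧ` along the projection `𝔤 → ǧ`. -/
def centralExtDflat (g : LinearMap.BilinForm ℝ V) (br : V →ₗ[ℝ] V →ₗ[ℝ] V)
    (σ : Fin k → LinearMap.BilinForm ℝ V) (ε : Fin k → ℝ) (p : V × (Fin k → ℝ)) :
    LinearMap.BilinForm ℝ V :=
  dflat g br p.1 + ∑ s, (ε s * p.2 s) • σ s

@[simp]
lemma centralExtDflat_inl {V : Type} [AddCommGroup V] [Module ℝ V] (g : LinearMap.BilinForm ℝ V)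
    (br : V →ₗ[ℝ] V →ₗ[ℝ] V) (σ : Fin k → LinearMap.BilinForm ℝ V) (ε : Fin k → ℝ) (v : V) :
    centralExtDflat g br σ ε (v, 0) = dflat g br v := by
  simp [centralExtDflat]

@[simp]
lemma centralExtDflat_single {V : Type} [AddCommGroup V] [Module ℝ V]
    (g : LinearMap.BilinForm ℝ V) (br : V →ₗ[ℝ] V →ₗ[ℝ] V) (σ : Fin k → LinearMap.BilinForm ℝ V)
    (ε : Fin k → ℝ) (s : Fin k) :
    centralExtDflat g br σ ε (0, Pi.single s 1) = ε s • σ s := by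
  ext x y
  simp [centralExtDflat, dflat, Pi.single_apply]

lemma dflat_apply_of_isCentralExtBracket {V : Type} [AddCommGroup V] [Module ℝ V]
    {g : LinearMap.BilinForm ℝ V} {ε : Fin k → ℝ} {gW : LinearMap.BilinForm ℝ (V × (Fin k → ℝ))}
    {br : V →ₗ[ℝ] V →ₗ[ℝ] V} {σ : Fin k → LinearMap.BilinForm ℝ V}
    {brW : (V × (Fin k → ℝ)) →ₗ[ℝ] (V × (Fin k → ℝ)) →ₗ[ℝ] (V × (Fin k → ℝ))}
    (hbrW : IsCentralExtBracket br σ brW) (hgW : IsOrthogonalSumMetric g ε gW)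
    (p x y : V × (Fin k → ℝ)) :
    dflat gW brW p x y = centralExtDflat g br σ ε p x.1 y.1 := by
  simp only [dflat, centralExtDflat, LinearMap.neg_apply, LinearMap.comp_apply,
    LinearMap.llcomp_apply, hbrW _ _, hgW _ _, LinearMap.add_apply, LinearMap.sum_apply,
    LinearMap.smul_apply, smul_eq_mul]
  rw [neg_add, ← Finset.sum_neg_distrib]
  congr 1
  exact Finset.sum_congr rfl fun s _ => by ring

variable (g : LinearMap.BilinForm ℝ V) (hg : g.Nondegenerate) (ε : Fin k → ℝ)
  (gW : LinearMap.BilinForm ℝ (V × (Fin k → ℝ))) (hgWnd : gW.Nondegenerate)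

lemma sharp_of_apply_fst (hgW : IsOrthogonalSumMetric g ε gW) {α : Module.Dual ℝ V}
    {β : Module.Dual ℝ (V × (Fin k → ℝ))} (hβ : ∀ q, β q = α q.1) :
    sharp gW hgWnd β = (sharp g hg α, 0) :=
  sharp_eq_of_forall_apply gW hgWnd fun q => by simp [hgW _ q, hβ, apply_sharp]

lemma endoOf_of_apply_fst (hgW : IsOrthogonalSumMetric g ε gW)
    {β₀ : LinearMap.BilinForm ℝ V} {β : LinearMap.BilinForm ℝ (V × (Fin k → ℝ))}
    (hβ : ∀ x y, β x y = β₀ x.1 y.1) (x : V × (Fin k → ℝ)) :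
    endoOf gW hgWnd β x = (endoOf g hg β₀ x.1, 0) :=
  sharp_of_apply_fst g hg ε gW hgWnd hgW (hβ x)

lemma adjE_endoOf_of_apply_fst (hgW : IsOrthogonalSumMetric g ε gW)
    {β₀ : LinearMap.BilinForm ℝ V} {β : LinearMap.BilinForm ℝ (V × (Fin k → ℝ))}
    (hβ : ∀ x y, β x y = β₀ x.1 y.1) (y : V × (Fin k → ℝ)) :
    adjE gW hgWnd (endoOf gW hgWnd β) y = (adjE g hg (endoOf g hg β₀) y.1, 0) :=
  adjE_eq_of_forall_apply gW hgWnd fun z => by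
    simp [hgW _ _, endoOf_of_apply_fst g hg ε gW hgWnd hgW hβ, apply_adjE]

lemma inner2_of_apply_fst (hgW : IsOrthogonalSumMetric g ε gW)
    {β₀ γ₀ : LinearMap.BilinForm ℝ V} {β γ : LinearMap.BilinForm ℝ (V × (Fin k → ℝ))}
    (hβ : ∀ x y, β x y = β₀ x.1 y.1) (hγ : ∀ x y, γ x y = γ₀ x.1 y.1) :
    inner2 gW hgWnd β γ = inner2 g hg β₀ γ₀ := by
  have hfst : fst ℝ V _ ∘ₗ (endoOf gW hgWnd β ∘ₗ adjE gW hgWnd (endoOf gW hgWnd γ)) ∘ₗ inl ℝ V _ =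
      endoOf g hg β₀ ∘ₗ adjE g hg (endoOf g hg γ₀) := by
    ext x
    simp [adjE_endoOf_of_apply_fst g hg ε gW hgWnd hgW hγ,
      endoOf_of_apply_fst g hg ε gW hgWnd hgW hβ]
  have hsnd : snd ℝ V _ ∘ₗ (endoOf gW hgWnd β ∘ₗ adjE gW hgWnd (endoOf gW hgWnd γ)) ∘ₗ
      inr ℝ V (Fin k → ℝ) = 0 := by
    ext c
    simp [endoOf_of_apply_fst g hg ε gW hgWnd hgW hβ]
  rw [inner2, inner2, trace_prod_eq_add, hfst, hsnd, map_zero, add_zero]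

variable (br : V →ₗ[ℝ] V →ₗ[ℝ] V) (σ : Fin k → LinearMap.BilinForm ℝ V)
  (brW : (V × (Fin k → ℝ)) →ₗ[ℝ] (V × (Fin k → ℝ)) →ₗ[ℝ] (V × (Fin k → ℝ)))

lemma trace_eq_zero_of_isCentralExtBracket (hbrW : IsCentralExtBracket br σ brW)
    (hnil : IsNilpotentBracket br) (p : V × (Fin k → ℝ)) :
    trace ℝ (V × (Fin k → ℝ)) (brW p) = 0 := by
  have hfst : fst ℝ V (Fin k → ℝ) ∘ₗ brW p ∘ₗ inl ℝ V (Fin k → ℝ) = br p.1 := by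
    ext x
    simp [hbrW _ _]
  have hsnd : snd ℝ V (Fin k → ℝ) ∘ₗ brW p ∘ₗ inr ℝ V (Fin k → ℝ) = 0 := by
    ext c
    simp [hbrW _ _]
  rw [trace_prod_eq_add, hfst, hsnd, trace_eq_zero_of_isNilpotentBracket hnil, map_zero,
    add_zero]

lemma trace_comp_of_isCentralExtBracket (hbrW : IsCentralExtBracket br σ brW)
    (p q : V × (Fin k → ℝ)) :
    trace ℝ (V × (Fin k → ℝ)) (brW p ∘ₗ brW q) = trace ℝ V (br p.1 ∘ₗ br q.1) := by
  have hfst : fst ℝ V (Fin k → ℝ) ∘ₗ (brW p ∘ₗ brW q) ∘ₗ inl ℝ V (Fin k → ℝ) =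
      br p.1 ∘ₗ br q.1 := by
    ext x
    simp [hbrW _ _]
  have hsnd : snd ℝ V (Fin k → ℝ) ∘ₗ (brW p ∘ₗ brW q) ∘ₗ inr ℝ V (Fin k → ℝ) = 0 := by
    ext c
    simp [hbrW _ _]
  rw [trace_prod_eq_add, hfst, hsnd, map_zero, add_zero]

lemma adjE_of_isCentralExtBracket (hbrW : IsCentralExtBracket br σ brW)
    (hgW : IsOrthogonalSumMetric g ε gW) (p y : V × (Fin k → ℝ)) :
    adjE gW hgWnd (brW p) y =
      (adjE g hg (br p.1) y.1 - ∑ s, (ε s * y.2 s) • sharp g hg (σ s p.1), 0) := by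
  refine adjE_eq_of_forall_apply gW hgWnd fun z => ?_
  simp only [hgW _ z, hbrW _ _, hgW _ y, map_sub, map_sum, map_smul, LinearMap.sub_apply,
    LinearMap.sum_apply, LinearMap.smul_apply, smul_eq_mul, apply_adjE, apply_sharp,
    Pi.zero_apply, mul_zero, zero_mul, Finset.sum_const_zero, add_zero]
  rw [sub_eq_add_neg, ← Finset.sum_neg_distrib]
  congr 1
  exact Finset.sum_congr rfl fun s _ => by ring

lemma innerEndo_of_isCentralExtBracket (hbrW : IsCentralExtBracket br σ brW)
    (hgW : IsOrthogonalSumMetric g ε gW) (p q : V × (Fin k → ℝ)) :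
    innerEndo gW hgWnd (brW p) (brW q) =
      innerEndo g hg (br p.1) (br q.1) + ∑ s, ε s * inner1 g hg (σ s p.1) (σ s q.1) := by
  have hadj := adjE_of_isCentralExtBracket g hg ε gW hgWnd br σ brW hbrW hgW q
  have hfst : fst ℝ V (Fin k → ℝ) ∘ₗ (brW p ∘ₗ adjE gW hgWnd (brW q)) ∘ₗ inl ℝ V (Fin k → ℝ) =
      br p.1 ∘ₗ adjE g hg (br q.1) := by
    ext x
    simp [hadj, hbrW _ _]
  have hsnd : trace ℝ (Fin k → ℝ)
      (snd ℝ V (Fin k → ℝ) ∘ₗ (brW p ∘ₗ adjE gW hgWnd (brW q)) ∘ₗ inr ℝ V (Fin k → ℝ)) =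
        ∑ s, ε s * inner1 g hg (σ s p.1) (σ s q.1) := by
    rw [trace_pi_eq_sum]
    refine Finset.sum_congr rfl fun s _ => ?_
    simp [hadj, hbrW _ _, Pi.single_apply, inner1, apply_sharp]
  rw [innerEndo, innerEndo, trace_prod_eq_add, hfst, hsnd]

theorem ricci_of_isCentralExtBracket (hnil : IsNilpotentBracket br)
    (hbrW : IsCentralExtBracket br σ brW) (hgW : IsOrthogonalSumMetric g ε gW)
    (p q : V × (Fin k → ℝ)) :
    ricci brW gW hgWnd p q =
      (inner2 g hg (centralExtDflat g br σ ε p) (centralExtDflat g br σ ε q)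
        - innerEndo g hg (br p.1) (br q.1) - ∑ s, ε s * inner1 g hg (σ s p.1) (σ s q.1)
        - trace ℝ V (br p.1 ∘ₗ br q.1)) / 2 := by
  rw [ricci_eq_of_trace_eq_zero gW hgWnd brW
      (trace_eq_zero_of_isCentralExtBracket br σ brW hbrW hnil),
    inner2_of_apply_fst g hg ε gW hgWnd hgW
      (dflat_apply_of_isCentralExtBracket hbrW hgW p)
      (dflat_apply_of_isCentralExtBracket hbrW hgW q),
    innerEndo_of_isCentralExtBracket g hg ε gW hgWnd br σ brW hbrW hgW,
    trace_comp_of_isCentralExtBracket br σ brW hbrW]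
  ring

end CentralExtension

theorem ricci_of_central_extension_general
    {V : Type} [AddCommGroup V] [Module ℝ V] [FiniteDimensional ℝ V]
    (br : V →ₗ[ℝ] V →ₗ[ℝ] V)
    (hnil : IsNilpotentBracket br)
    (g : LinearMap.BilinForm ℝ V)
    (hg : g.Nondegenerate)
    (k : ℕ) (σ : Fin k → LinearMap.BilinForm ℝ V)
    (ε : Fin k → ℝ)
    -- the central extension 𝔤 = ǧ ⊕ ℝᵏ
    (brW : (V × (Fin k → ℝ)) →ₗ[ℝ] (V × (Fin k → ℝ)) →ₗ[ℝ] (V × (Fin k → ℝ)))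
    (hbrW : ∀ p q : V × (Fin k → ℝ),
      brW p q = (br p.1 q.1, fun s => - σ s p.1 q.1))
    -- the metric g = ǧg + Σ_s ε_s e^s ⊗ e^s
    (gW : LinearMap.BilinForm ℝ (V × (Fin k → ℝ)))
    (hgW : ∀ p q : V × (Fin k → ℝ),
      gW p q = g p.1 q.1 + ∑ s, ε s * p.2 s * q.2 s)
    (hgWnd : gW.Nondegenerate) :
    (∀ v w : V,
      ricci brW gW hgWnd (v, 0) (w, 0) =
        ricci br g hg v w - (2:ℝ)⁻¹ * ∑ s, ε s * inner1 g hg (σ s v) (σ s w)) ∧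
    (∀ (v : V) (s : Fin k),
      ricci brW gW hgWnd (v, 0) (0, Pi.single s 1) =
        (2:ℝ)⁻¹ * ε s * inner2 g hg (dflat g br v) (σ s)) ∧
    (∀ s t : Fin k,
      ricci brW gW hgWnd (0, Pi.single s 1) (0, Pi.single t 1) =
        (2:ℝ)⁻¹ * ε s * ε t * inner2 g hg (σ s) (σ t)) := by
  have hricci := ricci_of_isCentralExtBracket g hg ε gW hgWnd br σ brW hnil hbrW hgW
  refine ⟨fun v w => ?_, fun v s => ?_, fun s t => ?_⟩
  · rw [hricci, ricci_eq_of_trace_eq_zero g hg br (trace_eq_zero_of_isNilpotentBracket hnil),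
      centralExtDflat_inl, centralExtDflat_inl]
    ring
  · simp only [hricci, centralExtDflat_inl, centralExtDflat_single, inner2_smul_right, map_zero,
      innerEndo_zero_right, inner1_zero_right, LinearMap.comp_zero, mul_zero,
      Finset.sum_const_zero]
    ring
  · simp only [hricci, centralExtDflat_single, inner2_smul_left, inner2_smul_right, map_zero,
      innerEndo_zero_right, inner1_zero_right, LinearMap.comp_zero, mul_zero,
      Finset.sum_const_zero]
    ring

/-- the Ricci tensor of a central extension of a nilpotent metric Lie
algebra by closed 2-forms `σ₁, …, σ_k`. -/
theorem ricci_of_central_extension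
    {V : Type} [AddCommGroup V] [Module ℝ V] [FiniteDimensional ℝ V]
    (br : V →ₗ[ℝ] V →ₗ[ℝ] V) (hbr : IsLieBracket br)
    (hnil : IsNilpotentBracket br)
    (g : LinearMap.BilinForm ℝ V) (hsym : ∀ x y, g x y = g y x)
    (hg : g.Nondegenerate)
    (k : ℕ) (σ : Fin k → LinearMap.BilinForm ℝ V)
    (hσalt : ∀ s (x y : V), σ s x y = - σ s y x)
    (hσcocycle : ∀ s (x y z : V),
      σ s (br x y) z + σ s (br y z) x + σ s (br z x) y = 0)
    (ε : Fin k → ℝ) (hε : ∀ s, ε s = 1 ∨ ε s = -1)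
    -- the central extension 𝔤 = ǧ ⊕ ℝᵏ
    (brW : (V × (Fin k → ℝ)) →ₗ[ℝ] (V × (Fin k → ℝ)) →ₗ[ℝ] (V × (Fin k → ℝ)))
    (hbrW : ∀ p q : V × (Fin k → ℝ),
      brW p q = (br p.1 q.1, fun s => - σ s p.1 q.1))
    -- the metric g = ǧg + Σ_s ε_s e^s ⊗ e^s
    (gW : LinearMap.BilinForm ℝ (V × (Fin k → ℝ)))
    (hgW : ∀ p q : V × (Fin k → ℝ),
      gW p q = g p.1 q.1 + ∑ s, ε s * p.2 s * q.2 s)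
    (hgWnd : gW.Nondegenerate) :
    (∀ v w : V,
      ricci brW gW hgWnd (v, 0) (w, 0) =
        ricci br g hg v w - (2:ℝ)⁻¹ * ∑ s, ε s * inner1 g hg (σ s v) (σ s w)) ∧
    (∀ (v : V) (s : Fin k),
      ricci brW gW hgWnd (v, 0) (0, Pi.single s 1) =
        (2:ℝ)⁻¹ * ε s * inner2 g hg (dflat g br v) (σ s)) ∧
    (∀ s t : Fin k,
      ricci brW gW hgWnd (0, Pi.single s 1) (0, Pi.single t 1) =
        (2:ℝ)⁻¹ * ε s * ε t * inner2 g hg (σ s) (σ t)) :=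
  ricci_of_central_extension_general br hnil g hg k σ ε brW hbrW gW hgW hgWnd
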